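/- Let X and Y be finite metric measure spaces with m-pointed partitions P_X and P_Y whose partition blocks all have metric diameter at most ε > 0, and quantized representations Xᵐ and Yᵐ. Let μ = Σ_{p,q} μ_m(xᵖ,y^q) μ̄_{xᵖ,y^q} be a quantization coupling whose global component μ_m minimizes the Gromov–Wasserstein loss over C(μ_{P_X}, μ_{P_Y}), i.e. GW(μ_m)^{1/2} = d_GW(Xᵐ, Yᵐ). Define GW*(μ) = Σ_{x,y,x',y'} J*(x,y,x',y')² μ(x,y)μ(x',y'), where, for x ∈ Uᵖ, x' ∈ U^{p'}, y ∈ V^q, y' ∈ V^{q'}, J*(x,y,x',y') = d_X(x,xᵖ) + d_X(xᵖ,x^{p'}) + d_X(x^{p'},x') − d_Y(y,y^q) − d_Y(y^q,y^{q'}) − d_Y(y^{q'},y'). Then GW*(μ)^{1/2} ≤ 2ε + d_GW(Xᵐ, Yᵐ). -/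

import Mathlib

open Finset

noncomputable section

/-- A probability vector on a finite type. -/
def IsProb {X : Type*} [Fintype X] (μ : X → ℝ) : Prop :=
  (∀ x, 0 ≤ μ x) ∧ (∑ x, μ x) = 1

/-- `μ` is a coupling of the probability vectors `μX` and `μY`. -/
def IsCoupling {X Y : Type*} [Fintype X] [Fintype Y]
    (μX : X → ℝ) (μY : Y → ℝ) (μ : X → Y → ℝ) : Prop :=
  (∀ x y, 0 ≤ μ x y) ∧ (∀ x, (∑ y, μ x y) = μX x) ∧ (∀ y, (∑ x, μ x y) = μY y)

/-- The Gromov–Wasserstein loss of a coupling, for given distance functions. -/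
def GWLoss {X Y : Type*} [Fintype X] [Fintype Y]
    (dX : X → X → ℝ) (dY : Y → Y → ℝ) (μ : X → Y → ℝ) : ℝ :=
  ∑ x, ∑ y, ∑ x', ∑ y', (dX x x' - dY y y') ^ 2 * μ x y * μ x' y'

/-- The Gromov–Wasserstein distance between two finite mm-spaces. -/
def dGW {X Y : Type*} [Fintype X] [Fintype Y]
    (dX : X → X → ℝ) (dY : Y → Y → ℝ) (μX : X → ℝ) (μY : Y → ℝ) : ℝ :=
  sInf {r : ℝ | ∃ μ, IsCoupling μX μY μ ∧ r = Real.sqrt (GWLoss dX dY μ)}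

/-- An `m`-pointed partition of `X`: each point is assigned to one of `m` blocks
(`part`), and each block `p` has a distinguished representative `rep p` lying in it.
Blocks are the fibers of `part`; they are disjoint, cover `X`, and are nonempty. -/
structure PointedPartition (X : Type*) (m : ℕ) where
  part : X → Fin m
  rep : Fin m → X
  part_rep : ∀ p, part (rep p) = p

/-- The mass `μ_X(Uᵖ)` of the block `Uᵖ`; as a function of `p` this is the measure
`μ_{P_X}` of the quantized representation `Xᵐ` (identified with `Fin m`). -/
def blockMass {X : Type*} [Fintype X] (μX : X → ℝ) {m : ℕ}
    (P : PointedPartition X m) (p : Fin m) : ℝ :=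
  ∑ x, if P.part x = p then μX x else 0

/-- The normalized measure `μ_{Uᵖ} = μ_X|_{Uᵖ} / μ_X(Uᵖ)` of a block, extended by zero
to all of `X` (this is `μ̄_{Uᵖ}`). -/
def blockMeasure {X : Type*} [Fintype X] (μX : X → ℝ) {m : ℕ}
    (P : PointedPartition X m) (p : Fin m) (x : X) : ℝ :=
  if P.part x = p then μX x / blockMass μX P p else 0

/-- `μ` is a quantization coupling: `μ(x,y) = Σ_{p,q} μm(xᵖ,y^q) μ̄_{xᵖ,y^q}(x,y)` where
`μm` couples the quantized measures and each `ν p q` is (the extension by zero of) a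
coupling of the block measures with `ν p q (xᵖ, y^q) > 0`. -/
def IsQuantCoupling {X Y : Type*} [Fintype X] [Fintype Y] {m : ℕ}
    (μX : X → ℝ) (μY : Y → ℝ)
    (PX : PointedPartition X m) (PY : PointedPartition Y m)
    (μ : X → Y → ℝ) : Prop :=
  ∃ (μm : Fin m → Fin m → ℝ) (ν : Fin m → Fin m → X → Y → ℝ),
    IsCoupling (blockMass μX PX) (blockMass μY PY) μm ∧
    (∀ p q, IsCoupling (blockMeasure μX PX p) (blockMeasure μY PY q) (ν p q)) ∧
    (∀ p q, 0 < ν p q (PX.rep p) (PY.rep q)) ∧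
    (∀ x y, μ x y = ∑ p, ∑ q, μm p q * ν p q x y)

/-- The quantized Gromov–Wasserstein distance between `m`-pointed mm-spaces. -/
def dqGW {X Y : Type*} [Fintype X] [Fintype Y] {m : ℕ}
    (dX : X → X → ℝ) (dY : Y → Y → ℝ) (μX : X → ℝ) (μY : Y → ℝ)
    (PX : PointedPartition X m) (PY : PointedPartition Y m) : ℝ :=
  sInf {r : ℝ | ∃ μ, IsQuantCoupling μX μY PX PY μ ∧ r = Real.sqrt (GWLoss dX dY μ)}

/-- The quantized eccentricity `q(P_X) = (Σ_p μ_X(Uᵖ) s_{Uᵖ}(xᵖ)²)^{1/2}`, where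
`s_{Uᵖ}(xᵖ)² = Σ_{x ∈ Uᵖ} d_X(xᵖ,x)² μ_{Uᵖ}(x)`. -/
def qEcc {X : Type*} [Fintype X] (dX : X → X → ℝ) (μX : X → ℝ) {m : ℕ}
    (P : PointedPartition X m) : ℝ :=
  Real.sqrt (∑ p, blockMass μX P p * ∑ x, dX (P.rep p) x ^ 2 * blockMeasure μX P p x)

/-- The `m`-quantized eccentricity `q_m(X)`: minimum of `q(P_X)` over `m`-pointed
partitions. -/
def qEccMin (X : Type*) [Fintype X] (dX : X → X → ℝ) (μX : X → ℝ) (m : ℕ) : ℝ :=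
  sInf {r : ℝ | ∃ P : PointedPartition X m, r = qEcc dX μX P}

end

/-- `J*(x,y,x',y')`: the approximation of `d_X(x,x') − d_Y(y,y')` obtained by routing
through the representatives of the blocks containing the points. -/
noncomputable def Jstar {X Y : Type*} [MetricSpace X] [MetricSpace Y] {m : ℕ}
    (PX : PointedPartition X m) (PY : PointedPartition Y m)
    (x : X) (y : Y) (x' : X) (y' : Y) : ℝ :=
  dist x (PX.rep (PX.part x)) + dist (PX.rep (PX.part x)) (PX.rep (PX.part x')) +
      dist (PX.rep (PX.part x')) x' -
    dist y (PY.rep (PY.part y)) - dist (PY.rep (PY.part y)) (PY.rep (PY.part y')) -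
      dist (PY.rep (PY.part y')) y'

/-- The loss `GW*(μ) = Σ J*(x,y,x',y')² μ(x,y) μ(x',y')`. -/
noncomputable def GWStarLoss {X Y : Type*} [Fintype X] [Fintype Y]
    [MetricSpace X] [MetricSpace Y] {m : ℕ}
    (PX : PointedPartition X m) (PY : PointedPartition Y m) (μ : X → Y → ℝ) : ℝ :=
  ∑ x, ∑ y, ∑ x', ∑ y', Jstar PX PY x y x' y' ^ 2 * μ x y * μ x' y'

/-! Write `Jstar = A + B`, where `B x y x' y' = d(xᵖ, x^{p'}) − d(y^q, y^{q'})` only sees the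
blocks of the points and `A` collects the four distances from points to their representatives,
so `|A| ≤ 2ε`. By Minkowski's inequality in `L²(μ ⊗ μ)`, `GW*(μ)^{1/2} ≤ ‖A‖ + ‖B‖ ≤ 2ε + ‖B‖`,
and since `μ` pushes forward to `μm` on blocks, `‖B‖² = GW(μm) = d_GW(Xᵐ, Yᵐ)²`. -/

section WeightedL2

variable {ι : Type*} [Fintype ι]

theorem sqrt_sum_add_sq_mul_le (u v w : ι → ℝ) (hw : ∀ i, 0 ≤ w i) :
    √(∑ i, (u i + v i) ^ 2 * w i) ≤ √(∑ i, u i ^ 2 * w i) + √(∑ i, v i ^ 2 * w i) := by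
  have hnorm (a : ι → ℝ) :
      √(∑ i, a i ^ 2 * w i) = ‖WithLp.toLp 2 (fun i => a i * √(w i))‖ := by
    rw [EuclideanSpace.norm_eq]
    simp [mul_pow, Real.sq_sqrt (hw _)]
  simp only [hnorm, add_mul]
  exact norm_add_le (WithLp.toLp 2 (fun i => u i * √(w i))) (WithLp.toLp 2 (fun i => v i * √(w i)))

theorem sqrt_sum_sq_mul_le_add_of_abs_sub_le {u v w : ι → ℝ} {c : ℝ} (hw : ∀ i, 0 ≤ w i)
    (hw₁ : ∑ i, w i = 1) (huv : ∀ i, |u i - v i| ≤ c) :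
    √(∑ i, u i ^ 2 * w i) ≤ c + √(∑ i, v i ^ 2 * w i) := by
  obtain ⟨i₀⟩ : Nonempty ι := by
    by_contra h
    simp [not_nonempty_iff.mp h] at hw₁
  have hc : 0 ≤ c := (abs_nonneg _).trans (huv i₀)
  have hdiff : √(∑ i, (u i - v i) ^ 2 * w i) ≤ c := by
    refine Real.sqrt_le_iff.mpr ⟨hc, ?_⟩
    calc ∑ i, (u i - v i) ^ 2 * w i ≤ ∑ i, c ^ 2 * w i := by
          refine sum_le_sum fun i _ => mul_le_mul_of_nonneg_right ?_ (hw i)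
          exact sq_le_sq' (abs_le.mp (huv i)).1 (abs_le.mp (huv i)).2
      _ = c ^ 2 := by rw [← mul_sum, hw₁, mul_one]
  calc √(∑ i, u i ^ 2 * w i) = √(∑ i, (u i - v i + v i) ^ 2 * w i) := by simp
    _ ≤ _ := (sqrt_sum_add_sq_mul_le _ _ w hw).trans (by gcongr)

end WeightedL2

theorem sqrt_sum_sq_mul_mul_le_add_of_abs_sub_le {X Y : Type*} [Fintype X] [Fintype Y]
    {μ : X → Y → ℝ} (hμ : ∀ x y, 0 ≤ μ x y) (hμ₁ : ∑ x, ∑ y, μ x y = 1)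
    {u v : X → Y → X → Y → ℝ} {c : ℝ} (huv : ∀ x y x' y', |u x y x' y' - v x y x' y'| ≤ c) :
    √(∑ x, ∑ y, ∑ x', ∑ y', u x y x' y' ^ 2 * μ x y * μ x' y') ≤
      c + √(∑ x, ∑ y, ∑ x', ∑ y', v x y x' y' ^ 2 * μ x y * μ x' y') := by
  have h := sqrt_sum_sq_mul_le_add_of_abs_sub_le (ι := (X × Y) × X × Y)
    (u := fun z => u z.1.1 z.1.2 z.2.1 z.2.2) (v := fun z => v z.1.1 z.1.2 z.2.1 z.2.2)
    (w := fun z => μ z.1.1 z.1.2 * μ z.2.1 z.2.2) (fun z => mul_nonneg (hμ _ _) (hμ _ _))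
    (by simp [Fintype.sum_prod_type, ← mul_sum, hμ₁]) (fun z => huv _ _ _ _)
  simpa only [Fintype.sum_prod_type, mul_assoc] using h

section Coupling

variable {X Y : Type*} [Fintype X] [Fintype Y]

theorem IsCoupling.sum_sum {μX : X → ℝ} {μY : Y → ℝ} {μ : X → Y → ℝ}
    (h : IsCoupling μX μY μ) : ∑ x, ∑ y, μ x y = ∑ x, μX x :=
  sum_congr rfl fun x _ => h.2.1 x

theorem IsCoupling.eq_zero_of_left_eq_zero {μX : X → ℝ} {μY : Y → ℝ} {μ : X → Y → ℝ}
    (h : IsCoupling μX μY μ) {x : X} (hx : μX x = 0) (y : Y) : μ x y = 0 :=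
  (sum_eq_zero_iff_of_nonneg fun y _ => h.1 x y).mp ((h.2.1 x).trans hx) y (mem_univ y)

theorem IsCoupling.eq_zero_of_right_eq_zero {μX : X → ℝ} {μY : Y → ℝ} {μ : X → Y → ℝ}
    (h : IsCoupling μX μY μ) {y : Y} (hy : μY y = 0) (x : X) : μ x y = 0 :=
  (sum_eq_zero_iff_of_nonneg fun x _ => h.1 x y).mp ((h.2.2 y).trans hy) x (mem_univ x)

end Coupling

section Blocks

variable {X : Type*} [Fintype X] {m : ℕ} (μX : X → ℝ) (P : PointedPartition X m)

theorem sum_blockMass : ∑ p, blockMass μX P p = ∑ x, μX x := by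
  unfold blockMass
  rw [sum_comm]
  simp

theorem blockMeasure_of_part_ne {p : Fin m} {x : X} (hx : P.part x ≠ p) :
    blockMeasure μX P p x = 0 :=
  if_neg hx

theorem sum_blockMeasure (p : Fin m) :
    ∑ x, blockMeasure μX P p x = blockMass μX P p / blockMass μX P p := by
  simp only [blockMeasure, blockMass, sum_div, ite_div, zero_div]

end Blocks

/-- The paper's `Σ_{p,q} μm(xᵖ,y^q) μ̄_{xᵖ,y^q}`. -/
def quantCouplingOf {X Y : Type*} {m : ℕ} (μm : Fin m → Fin m → ℝ)
    (ν : Fin m → Fin m → X → Y → ℝ) (x : X) (y : Y) : ℝ :=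
  ∑ p, ∑ q, μm p q * ν p q x y

section QuantCoupling

variable {X Y : Type*} [Fintype X] [Fintype Y] {m : ℕ} {μX : X → ℝ} {μY : Y → ℝ}
  {PX : PointedPartition X m} {PY : PointedPartition Y m}

theorem IsCoupling.mul_sum_sum_of_blockMeasure {μm : Fin m → Fin m → ℝ} {μQ : Fin m → ℝ}
    (hμm : IsCoupling (blockMass μX PX) μQ μm) {p : Fin m} {ν : X → Y → ℝ} {νY : Y → ℝ}
    (hν : IsCoupling (blockMeasure μX PX p) νY ν) (q : Fin m) :
    μm p q * ∑ x, ∑ y, ν x y = μm p q := by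
  rw [hν.sum_sum, sum_blockMeasure]
  -- a null block carries no `μm`-mass, which absorbs the junk value `0 / 0 = 0`
  by_cases hp : blockMass μX PX p = 0
  · rw [hμm.eq_zero_of_left_eq_zero hp q, zero_mul]
  · rw [div_self hp, mul_one]

theorem IsCoupling.sum_sum_comp_part_mul {p q : Fin m} {ν : X → Y → ℝ}
    (hν : IsCoupling (blockMeasure μX PX p) (blockMeasure μY PY q) ν)
    (f : Fin m → Fin m → ℝ) :
    ∑ x, ∑ y, f (PX.part x) (PY.part y) * ν x y = f p q * ∑ x, ∑ y, ν x y := by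
  simp only [mul_sum]
  refine sum_congr rfl fun x _ => sum_congr rfl fun y _ => ?_
  by_cases hx : PX.part x = p
  · by_cases hy : PY.part y = q
    · rw [hx, hy]
    · rw [hν.eq_zero_of_right_eq_zero (blockMeasure_of_part_ne μY PY hy), mul_zero, mul_zero]
  · rw [hν.eq_zero_of_left_eq_zero (blockMeasure_of_part_ne μX PX hx), mul_zero, mul_zero]

variable {μm : Fin m → Fin m → ℝ} {ν : Fin m → Fin m → X → Y → ℝ}

theorem quantCouplingOf_nonneg (hμm : IsCoupling (blockMass μX PX) (blockMass μY PY) μm)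
    (hν : ∀ p q, IsCoupling (blockMeasure μX PX p) (blockMeasure μY PY q) (ν p q)) (x : X)
    (y : Y) : 0 ≤ quantCouplingOf μm ν x y :=
  sum_nonneg fun p _ => sum_nonneg fun q _ => mul_nonneg (hμm.1 p q) ((hν p q).1 x y)

/-- `quantCouplingOf μm ν` pushes forward to `μm` under the block maps. -/
theorem sum_sum_comp_part_mul_quantCouplingOf
    (hμm : IsCoupling (blockMass μX PX) (blockMass μY PY) μm)
    (hν : ∀ p q, IsCoupling (blockMeasure μX PX p) (blockMeasure μY PY q) (ν p q))
    (f : Fin m → Fin m → ℝ) :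
    ∑ x, ∑ y, f (PX.part x) (PY.part y) * quantCouplingOf μm ν x y =
      ∑ p, ∑ q, f p q * μm p q := by
  calc ∑ x, ∑ y, f (PX.part x) (PY.part y) * quantCouplingOf μm ν x y
      = ∑ p, ∑ q, μm p q * ∑ x, ∑ y, f (PX.part x) (PY.part y) * ν p q x y := by
        simp only [quantCouplingOf, mul_sum]
        simp_rw [sum_comm (γ := Y) (α := Fin m), sum_comm (γ := X) (α := Fin m)]
        simp only [mul_left_comm (f _ _)]
    _ = ∑ p, ∑ q, f p q * μm p q := by
        refine sum_congr rfl fun p _ => sum_congr rfl fun q _ => ?_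
        rw [(hν p q).sum_sum_comp_part_mul, mul_left_comm,
          hμm.mul_sum_sum_of_blockMeasure (hν p q)]

theorem sum_sum_quantCouplingOf (hμX : IsProb μX)
    (hμm : IsCoupling (blockMass μX PX) (blockMass μY PY) μm)
    (hν : ∀ p q, IsCoupling (blockMeasure μX PX p) (blockMeasure μY PY q) (ν p q)) :
    ∑ x, ∑ y, quantCouplingOf μm ν x y = 1 := by
  simpa [hμm.sum_sum, sum_blockMass, hμX.2] using
    sum_sum_comp_part_mul_quantCouplingOf hμm hν fun _ _ => 1

theorem sum4_comp_part_mul_quantCouplingOf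
    (hμm : IsCoupling (blockMass μX PX) (blockMass μY PY) μm)
    (hν : ∀ p q, IsCoupling (blockMeasure μX PX p) (blockMeasure μY PY q) (ν p q))
    (g : Fin m → Fin m → Fin m → Fin m → ℝ) :
    ∑ x, ∑ y, ∑ x', ∑ y', g (PX.part x) (PY.part y) (PX.part x') (PY.part y') *
        quantCouplingOf μm ν x y * quantCouplingOf μm ν x' y' =
      ∑ p, ∑ q, ∑ p', ∑ q', g p q p' q' * μm p q * μm p' q' := by
  have inner (x : X) (y : Y) := sum_sum_comp_part_mul_quantCouplingOf hμm hν
    fun p' q' => g (PX.part x) (PY.part y) p' q' * quantCouplingOf μm ν x y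
  calc _ = ∑ x, ∑ y, (∑ p', ∑ q', g (PX.part x) (PY.part y) p' q' * μm p' q') *
          quantCouplingOf μm ν x y := by
        refine sum_congr rfl fun x _ => sum_congr rfl fun y _ => ?_
        rw [inner x y]
        simp only [sum_mul]
        exact sum_congr rfl fun _ _ => sum_congr rfl fun _ _ => by ring
    _ = ∑ p, ∑ q, (∑ p', ∑ q', g p q p' q' * μm p' q') * μm p q :=
        sum_sum_comp_part_mul_quantCouplingOf hμm hν
          fun p q => ∑ p', ∑ q', g p q p' q' * μm p' q'
    _ = _ := by
        simp only [sum_mul]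
        exact sum_congr rfl fun _ _ => sum_congr rfl fun _ _ =>
          sum_congr rfl fun _ _ => sum_congr rfl fun _ _ => by ring

end QuantCoupling

theorem abs_Jstar_sub_dist_rep_le {X Y : Type*} [MetricSpace X] [MetricSpace Y] {m : ℕ}
    {PX : PointedPartition X m} {PY : PointedPartition Y m} {ε : ℝ}
    (hdiamX : ∀ x x' : X, PX.part x = PX.part x' → dist x x' ≤ ε)
    (hdiamY : ∀ y y' : Y, PY.part y = PY.part y' → dist y y' ≤ ε) (x : X) (y : Y) (x' : X)
    (y' : Y) :
    |Jstar PX PY x y x' y' - (dist (PX.rep (PX.part x)) (PX.rep (PX.part x')) -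
      dist (PY.rep (PY.part y)) (PY.rep (PY.part y')))| ≤ 2 * ε := by
  have hx := hdiamX x _ (PX.part_rep _).symm
  have hx' := hdiamX _ x' (PX.part_rep _)
  have hy := hdiamY y _ (PY.part_rep _).symm
  have hy' := hdiamY _ y' (PY.part_rep _)
  have := dist_nonneg (x := x) (y := PX.rep (PX.part x))
  have := dist_nonneg (x := PX.rep (PX.part x')) (y := x')
  have := dist_nonneg (x := y) (y := PY.rep (PY.part y))
  have := dist_nonneg (x := PY.rep (PY.part y')) (y := y')
  rw [abs_le, Jstar]
  constructor <;> linarith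

theorem sqrt_GWStarLoss_le_of_optimal_global_general
    {X Y : Type*} [Fintype X] [Fintype Y] [MetricSpace X] [MetricSpace Y] {m : ℕ}
    (μX : X → ℝ) (μY : Y → ℝ) (hμX : IsProb μX)
    (PX : PointedPartition X m) (PY : PointedPartition Y m)
    (ε : ℝ)
    (hdiamX : ∀ x x' : X, PX.part x = PX.part x' → dist x x' ≤ ε)
    (hdiamY : ∀ y y' : Y, PY.part y = PY.part y' → dist y y' ≤ ε)
    (μm : Fin m → Fin m → ℝ) (ν : Fin m → Fin m → X → Y → ℝ)
    (hμm : IsCoupling (blockMass μX PX) (blockMass μY PY) μm)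
    (hν : ∀ p q, IsCoupling (blockMeasure μX PX p) (blockMeasure μY PY q) (ν p q))
    (hopt : Real.sqrt (GWLoss (fun p p' => dist (PX.rep p) (PX.rep p'))
          (fun q q' => dist (PY.rep q) (PY.rep q')) μm) =
        dGW (fun p p' => dist (PX.rep p) (PX.rep p'))
          (fun q q' => dist (PY.rep q) (PY.rep q'))
          (blockMass μX PX) (blockMass μY PY)) :
    Real.sqrt (GWStarLoss PX PY (fun x y => ∑ p, ∑ q, μm p q * ν p q x y)) ≤
      2 * ε + dGW (fun p p' => dist (PX.rep p) (PX.rep p'))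
        (fun q q' => dist (PY.rep q) (PY.rep q'))
        (blockMass μX PX) (blockMass μY PY) := by
  have hB := sum4_comp_part_mul_quantCouplingOf hμm hν fun p q p' q' =>
    (dist (PX.rep p) (PX.rep p') - dist (PY.rep q) (PY.rep q')) ^ 2
  rw [← hopt, GWLoss, ← hB]
  exact sqrt_sum_sq_mul_mul_le_add_of_abs_sub_le (quantCouplingOf_nonneg hμm hν)
    (sum_sum_quantCouplingOf hμX hμm hν) (abs_Jstar_sub_dist_rep_le hdiamX hdiamY)

/-- for a quantization coupling whose global component is an optimal
coupling of the quantized representations, `GW*(μ)^{1/2} ≤ 2ε + d_GW(Xᵐ,Yᵐ)`. -/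
theorem sqrt_GWStarLoss_le_of_optimal_global
    {X Y : Type*} [Fintype X] [Fintype Y] [MetricSpace X] [MetricSpace Y] {m : ℕ}
    (μX : X → ℝ) (μY : Y → ℝ) (hμX : IsProb μX) (hμY : IsProb μY)
    (PX : PointedPartition X m) (PY : PointedPartition Y m)
    (ε : ℝ) (hε : 0 < ε)
    (hdiamX : ∀ x x' : X, PX.part x = PX.part x' → dist x x' ≤ ε)
    (hdiamY : ∀ y y' : Y, PY.part y = PY.part y' → dist y y' ≤ ε)
    (μm : Fin m → Fin m → ℝ) (ν : Fin m → Fin m → X → Y → ℝ)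
    (hμm : IsCoupling (blockMass μX PX) (blockMass μY PY) μm)
    (hν : ∀ p q, IsCoupling (blockMeasure μX PX p) (blockMeasure μY PY q) (ν p q))
    (hνpos : ∀ p q, 0 < ν p q (PX.rep p) (PY.rep q))
    (hopt : Real.sqrt (GWLoss (fun p p' => dist (PX.rep p) (PX.rep p'))
          (fun q q' => dist (PY.rep q) (PY.rep q')) μm) =
        dGW (fun p p' => dist (PX.rep p) (PX.rep p'))
          (fun q q' => dist (PY.rep q) (PY.rep q'))
          (blockMass μX PX) (blockMass μY PY)) :
    Real.sqrt (GWStarLoss PX PY (fun x y => ∑ p, ∑ q, μm p q * ν p q x y)) ≤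
      2 * ε + dGW (fun p p' => dist (PX.rep p) (PX.rep p'))
        (fun q q' => dist (PY.rep q) (PY.rep q'))
        (blockMass μX PX) (blockMass μY PY) :=
  sqrt_GWStarLoss_le_of_optimal_global_general μX μY hμX PX PY ε hdiamX hdiamY μm ν hμm hν hopt
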